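/- Let ψ = ∀x₁,…,x_n ∃y₁,…,y_m. φ where φ = c₁ ∧ … ∧ c_k is a quantifier-free CNF formula. Over the alphabet {d₁,…,d_k, t₁,f₁,…,t_n,f_n}, define E_ψ = d₁ || … || d_k || X₁ || … || X_n where X_i = ((t_i || d_{a₁} || … || d_{a_l}) | (f_i || d_{b₁} || … || d_{b_s})) with d_{a₁},…,d_{a_l} the symbols of the clauses using the literal x_i and d_{b₁},…,d_{b_s} those of the clauses using ¬x_i; and define E'_ψ = X'₁ || … || X'_n || Y₁ || … || Y_m where X'_i = ((t_i || d_{a₁}* || … || d_{a_l}*) | (f_i || d_{b₁}* || … || d_{b_s}*)) with the same correspondence of d's for x_i, and Y_j = ((d_{a₁}* || … || d_{a_l}*) | (d_{b₁}* || … || d_{b_s}*)) with d_{a₁},…,d_{a_l} the symbols of the clauses using the literal y_j and d_{b₁},…,d_{b_s} those using ¬y_j. Then ψ is true (for every valuation of x₁,…,x_n there exists a valuation of y₁,…,y_m satisfying φ) if and only if L(E_ψ) ⊆ L(E'_ψ). -/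

import Mathlib

set_option autoImplicit false

universe u v w

/-- An unordered word over an alphabet `σ`: a multiset over `σ`,
viewed as a function giving the number of occurrences of each symbol. -/
def UWord (σ : Type u) : Type u := σ → ℕ

/-- The empty unordered word `ε`. -/
def UWord.zero {σ : Type u} : UWord σ := fun _ => 0

/-- Unordered concatenation (multiset union) of two unordered words. -/
def UWord.add {σ : Type u} (w₁ w₂ : UWord σ) : UWord σ := fun a => w₁ a + w₂ a

/-- The unordered word consisting of a single occurrence of `a`. -/
def UWord.single {σ : Type u} [DecidableEq σ] (a : σ) : UWord σ :=
  fun b => if b = a then 1 else 0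

/-- Unordered concatenation of a list of unordered words. -/
def listSum {σ : Type u} (l : List (UWord σ)) : UWord σ := l.foldr UWord.add UWord.zero

/-- Unordered regular expressions (UREs):
`E ::= ε | a | E* | (E|E) | (E||E)`. -/
inductive URE (σ : Type u) : Type u where
  | eps : URE σ
  | sym : σ → URE σ
  | star : URE σ → URE σ
  | alt : URE σ → URE σ → URE σ
  | conc : URE σ → URE σ → URE σ

/-- The language of unordered words defined by a URE. -/
def URE.lang {σ : Type u} [DecidableEq σ] : URE σ → Set (UWord σ)
  | .eps => {UWord.zero}
  | .sym a => {UWord.single a}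
  | .star E => {w | ∃ l : List (UWord σ), (∀ x ∈ l, x ∈ URE.lang E) ∧ w = listSum l}
  | .alt E₁ E₂ => URE.lang E₁ ∪ URE.lang E₂
  | .conc E₁ E₂ => {w | ∃ w₁ ∈ URE.lang E₁, ∃ w₂ ∈ URE.lang E₂, w = w₁.add w₂}

/-- The macro `E? = E | ε`. -/
def URE.opt {σ : Type u} (E : URE σ) : URE σ := URE.alt E URE.eps

/-- The macro `E⁺ = E || E*`. -/
def URE.plus {σ : Type u} (E : URE σ) : URE σ := URE.conc E (URE.star E)

/-- Unordered concatenation `E₁ || ⋯ || E_k` of a list of UREs. -/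
def URE.concList {σ : Type u} (l : List (URE σ)) : URE σ := l.foldr URE.conc URE.eps

/-- Disjunction `E₁ | ⋯ | E_k` of a (nonempty) list of UREs. -/
def URE.altList {σ : Type u} : List (URE σ) → URE σ
  | [] => URE.eps
  | [E] => E
  | E :: F :: rest => URE.alt E (URE.altList (F :: rest))

/-- The language of the interval multiplicity `E^[lo,hi]` (finite bounds):
unordered concatenations of between `lo` and `hi` words of `L(E)`. -/
def URE.langIter {σ : Type u} [DecidableEq σ] (E : URE σ) (lo hi : ℕ) : Set (UWord σ) :=
  {w | ∃ l : List (UWord σ),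
      (∀ x ∈ l, x ∈ URE.lang E) ∧ lo ≤ l.length ∧ l.length ≤ hi ∧ w = listSum l}

/- The alphabet `{d₁,…,d_k, t₁,f₁,…,t_n,f_n}`: `Sum.inl i` is the symbol `d_i` of the
clause `c_i`, `Sum.inr (Sum.inl i)` is `t_i`, and `Sum.inr (Sum.inr i)` is `f_i`.
The quantifier-free CNF formula `φ = c₁ ∧ … ∧ c_k` over the universal variables
`x₁,…,x_n` and the existential variables `y₁,…,y_m` is given by its sets of literals
`lits i` (a literal is a variable `Fin n ⊕ Fin m` together with a sign). -/

/-- The alphabet for the formula `ψ`. -/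
abbrev QSym (k n : ℕ) : Type := Fin k ⊕ (Fin n ⊕ Fin n)

/-- The URE `d_i`. -/
def qd (k n : ℕ) (i : Fin k) : URE (QSym k n) := URE.sym (Sum.inl i)
/-- The URE `t_i`. -/
def qt (k n : ℕ) (i : Fin n) : URE (QSym k n) := URE.sym (Sum.inr (Sum.inl i))
/-- The URE `f_i`. -/
def qf (k n : ℕ) (i : Fin n) : URE (QSym k n) := URE.sym (Sum.inr (Sum.inr i))

/-- The list of (indices `i` of) clauses `c_i` using the literal given by
variable `x` and sign `s`. -/
def clausesUsing {k n m : ℕ} (lits : Fin k → Finset ((Fin n ⊕ Fin m) × Bool))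
    (x : Fin n ⊕ Fin m) (s : Bool) : List (Fin k) :=
  (List.finRange k).filter (fun i => (x, s) ∈ lits i)

/-- `X_i = ((t_i || d_{a₁} || … || d_{a_l}) | (f_i || d_{b₁} || … || d_{b_s}))`. -/
def X9 {k n m : ℕ} (lits : Fin k → Finset ((Fin n ⊕ Fin m) × Bool)) (i : Fin n) :
    URE (QSym k n) :=
  URE.alt
    (URE.concList (qt k n i :: (clausesUsing lits (Sum.inl i) true).map (qd k n)))
    (URE.concList (qf k n i :: (clausesUsing lits (Sum.inl i) false).map (qd k n)))

/-- `E_ψ = d₁ || … || d_k || X₁ || … || X_n`. -/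
def E9 {k n m : ℕ} (lits : Fin k → Finset ((Fin n ⊕ Fin m) × Bool)) : URE (QSym k n) :=
  URE.conc
    (URE.concList ((List.finRange k).map (qd k n)))
    (URE.concList ((List.finRange n).map (X9 lits)))

/-- `X'_i = ((t_i || d_{a₁}* || … || d_{a_l}*) | (f_i || d_{b₁}* || … || d_{b_s}*))`. -/
def X9' {k n m : ℕ} (lits : Fin k → Finset ((Fin n ⊕ Fin m) × Bool)) (i : Fin n) :
    URE (QSym k n) :=
  URE.alt
    (URE.concList (qt k n i ::
      (clausesUsing lits (Sum.inl i) true).map (fun c => URE.star (qd k n c))))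
    (URE.concList (qf k n i ::
      (clausesUsing lits (Sum.inl i) false).map (fun c => URE.star (qd k n c))))

/-- `Y_j = ((d_{a₁}* || … || d_{a_l}*) | (d_{b₁}* || … || d_{b_s}*))`. -/
def Y9 {k n m : ℕ} (lits : Fin k → Finset ((Fin n ⊕ Fin m) × Bool)) (j : Fin m) :
    URE (QSym k n) :=
  URE.alt
    (URE.concList ((clausesUsing lits (Sum.inr j) true).map (fun c => URE.star (qd k n c))))
    (URE.concList ((clausesUsing lits (Sum.inr j) false).map (fun c => URE.star (qd k n c))))

/-- `E'_ψ = X'₁ || … || X'_n || Y₁ || … || Y_m`. -/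
def E9' {k n m : ℕ} (lits : Fin k → Finset ((Fin n ⊕ Fin m) × Bool)) : URE (QSym k n) :=
  URE.conc
    (URE.concList ((List.finRange n).map (X9' lits)))
    (URE.concList ((List.finRange m).map (Y9 lits)))


/-!
The `t/f`-part of a word of `L(E_ψ)` encodes a valuation `vx` of the `x`'s, and the word
contains every `d_c`. A word of `L(E'_ψ)` is one whose `t/f`-part encodes some `vx` and whose
`d`-part splits into one piece per variable, each using only clauses that contain the literal of
that variable made true by `vx` and some `vy` (chosen by the `Y_j`). If `vx, vy` satisfy every
clause, any `d`-part can be split this way, by sending `d_c` to a true literal of `c`; conversely,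
every `d_c` of a word of `L(E_ψ)` must be sent somewhere, so every clause has a true literal.
-/

namespace UWord

variable {σ : Type u}

lemma add_apply (w₁ w₂ : UWord σ) (a : σ) : w₁.add w₂ a = w₁ a + w₂ a := rfl

lemma single_apply [DecidableEq σ] (a b : σ) : single a b = if b = a then 1 else 0 := rfl

end UWord

lemma listSum_apply {σ : Type u} (l : List (UWord σ)) (a : σ) :
    listSum l a = (l.map (fun w => w a)).sum := by
  induction l with
  | nil => rfl
  | cons w l ih => simp [listSum, UWord.add_apply, ← ih]

namespace URE

variable {σ : Type u} [DecidableEq σ] {w : UWord σ}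

lemma mem_lang_conc {E F : URE σ} :
    w ∈ (conc E F).lang ↔ ∃ w₁ ∈ E.lang, ∃ w₂ ∈ F.lang, w = w₁.add w₂ := Iff.rfl

lemma mem_lang_star_sym {a : σ} : w ∈ (star (sym a)).lang ↔ ∀ b, w b ≠ 0 → b = a := by
  constructor
  · rintro ⟨l, hl, rfl⟩ b hb
    by_contra hba
    refine hb ((listSum_apply l b).trans (List.sum_eq_zero ?_))
    simp only [List.mem_map]
    rintro _ ⟨x, hx, rfl⟩
    simp [show x = UWord.single a from hl x hx, UWord.single_apply, hba]
  · intro h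
    refine ⟨List.replicate (w a) (UWord.single a),
      fun x hx => List.eq_of_mem_replicate hx ▸ rfl, ?_⟩
    funext b
    rw [listSum_apply, List.map_replicate, List.sum_replicate, smul_eq_mul, UWord.single_apply]
    by_cases hb : b = a
    · simp [hb]
    · simpa [hb] using mt (h b) hb

lemma mem_lang_concList_map_sym (S : List σ) :
    w ∈ (concList (S.map sym)).lang ↔ ∀ a, w a = Multiset.count a S := by
  induction S generalizing w with
  | nil => exact ⟨fun h a => congrFun h a, fun h => funext h⟩
  | cons c S ih =>
    have hcount (a : σ) :
        Multiset.count a ↑(c :: S) = UWord.single c a + Multiset.count a S := by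
      rw [← Multiset.cons_coe, Multiset.count_cons, UWord.single_apply, add_comm]
    simp only [List.map_cons, concList, List.foldr_cons, hcount]
    rw [mem_lang_conc]
    constructor
    · rintro ⟨_, rfl, w₂, h₂, rfl⟩ a
      rw [UWord.add_apply, ih.1 h₂]
    · intro h
      exact ⟨_, rfl, _, ih.2 fun a => rfl, funext h⟩

lemma mem_lang_concList_map_star_sym (S : List σ) :
    w ∈ (concList (S.map fun a => star (sym a))).lang ↔ ∀ a, w a ≠ 0 → a ∈ S := by
  induction S generalizing w with
  | nil =>
    simp only [List.map_nil, List.not_mem_nil, imp_false, not_not]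
    exact ⟨fun h a => congrFun h a, fun h => funext h⟩
  | cons c S ih =>
    simp only [List.map_cons, concList, List.foldr_cons]
    rw [mem_lang_conc]
    constructor
    · rintro ⟨w₁, h₁, w₂, h₂, rfl⟩ a ha
      rw [UWord.add_apply] at ha
      by_cases h : w₁ a = 0
      · exact List.mem_cons_of_mem c (ih.1 h₂ a (by omega))
      · exact List.mem_cons.2 (Or.inl (mem_lang_star_sym.1 h₁ a h))
    · intro h
      refine ⟨fun a => if a = c then w a else 0, mem_lang_star_sym.2 fun b hb => ?_,
        fun a => if a = c then 0 else w a, ih.2 fun b hb => ?_, ?_⟩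
      · by_contra h'; simp [h'] at hb
      · by_cases h' : b = c
        · simp [h'] at hb
        · simp only [h', if_false] at hb
          exact (List.mem_cons.1 (h b hb)).resolve_left h'
      · funext a
        show w a = (if a = c then w a else 0) + (if a = c then 0 else w a)
        by_cases h' : a = c <;> simp [h']

lemma mem_lang_concList_map_finRange {N : ℕ} (F : Fin N → URE σ) :
    w ∈ (concList ((List.finRange N).map F)).lang ↔
      ∃ u : Fin N → UWord σ, (∀ i, u i ∈ (F i).lang) ∧ ∀ a, w a = ∑ i, u i a := by
  induction N generalizing w with
  | zero =>
    simp only [List.finRange_zero, List.map_nil, Finset.univ_eq_empty, Finset.sum_empty]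
    exact ⟨fun h => ⟨finZeroElim, finZeroElim, fun a => congrFun h a⟩,
      fun ⟨_, _, h⟩ => funext h⟩
  | succ N ih =>
    simp only [List.finRange_succ, List.map_cons, List.map_map, concList, List.foldr_cons]
    rw [mem_lang_conc]
    constructor
    · rintro ⟨w₁, h₁, w₂, h₂, rfl⟩
      obtain ⟨u, hu, hw₂⟩ := ih (F ∘ Fin.succ) |>.1 h₂
      refine ⟨Fin.cons w₁ u, Fin.cases h₁ hu, fun a => ?_⟩
      simp [Fin.sum_univ_succ, UWord.add_apply, hw₂]
    · rintro ⟨u, hu, hw⟩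
      refine ⟨u 0, hu 0, fun a => ∑ i : Fin N, u i.succ a,
        ih (F ∘ Fin.succ) |>.2 ⟨_, fun i => hu i.succ, fun a => rfl⟩, ?_⟩
      funext a
      rw [hw a, Fin.sum_univ_succ]
      rfl

end URE

namespace QSym

variable {k n m : ℕ} (lits : Fin k → Finset ((Fin n ⊕ Fin m) × Bool))

def tfSym (i : Fin n) (b : Bool) : Fin n ⊕ Fin n := bif b then .inl i else .inr i

lemma tfSym_inj {i i' : Fin n} {b b' : Bool} : tfSym i b = tfSym i' b' ↔ i = i' ∧ b = b' := by
  cases b <;> cases b' <;> simp [tfSym]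

def valWord (v : Fin n → Bool) : UWord (Fin n ⊕ Fin n) :=
  fun x => ∑ i, UWord.single (tfSym i (v i)) x

lemma valWord_tfSym (v : Fin n → Bool) (i : Fin n) (b : Bool) :
    valWord v (tfSym i b) = if v i = b then 1 else 0 := by
  rw [valWord, Finset.sum_eq_single i]
  · simp [UWord.single_apply, tfSym_inj, eq_comm]
  · intro i' _ hi'
    simp [UWord.single_apply, tfSym_inj, Ne.symm hi']
  · simp

lemma valWord_injective : Function.Injective (valWord (n := n)) := by
  intro v v' h
  funext i
  have := congrFun h (tfSym i (v i))
  simp only [valWord_tfSym, if_true] at this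
  split_ifs at this with h'
  exact h'.symm

def Encodes (v : Fin n → Bool) (w : UWord (QSym k n)) : Prop :=
  ∀ x, w (Sum.inr x) = valWord v x

lemma Encodes.unique {v v' : Fin n → Bool} {w : UWord (QSym k n)} (h : Encodes v w)
    (h' : Encodes v' w) : v = v' :=
  valWord_injective (funext fun x => (h x).symm.trans (h' x))

def Satisfies {α : Type*} (v : α → Bool) (C : Finset (α × Bool)) : Prop :=
  ∃ ℓ ∈ C, v ℓ.1 = ℓ.2

lemma mem_clausesUsing {x : Fin n ⊕ Fin m} {b : Bool} {c : Fin k} :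
    c ∈ clausesUsing lits x b ↔ (x, b) ∈ lits c := by
  simp [clausesUsing]

lemma mem_lang_concList_map_qd {w : UWord (QSym k n)} (S : List (Fin k)) :
    w ∈ (URE.concList (S.map (qd k n))).lang ↔
      (∀ c, w (.inl c) = S.count c) ∧ ∀ x, w (.inr x) = 0 := by
  rw [show S.map (qd k n) = (S.map Sum.inl).map URE.sym by rw [List.map_map]; rfl,
    URE.mem_lang_concList_map_sym, Sum.forall]
  simp [← Multiset.map_coe, Multiset.count_map_eq_count' _ _ Sum.inl_injective]

lemma mem_lang_concList_clausesUsing_star {w : UWord (QSym k n)} {x : Fin n ⊕ Fin m}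
    {b : Bool} :
    w ∈ (URE.concList ((clausesUsing lits x b).map fun c => URE.star (qd k n c))).lang ↔
      ∀ a, w a ≠ 0 → ∃ c, (x, b) ∈ lits c ∧ a = Sum.inl c := by
  rw [show (clausesUsing lits x b).map (fun c => URE.star (qd k n c)) =
      ((clausesUsing lits x b).map Sum.inl).map fun a => URE.star (URE.sym a) by
    rw [List.map_map]; rfl, URE.mem_lang_concList_map_star_sym]
  simp [mem_clausesUsing, eq_comm]

lemma mem_lang_X9 {i : Fin n} {u : UWord (QSym k n)} :
    u ∈ (X9 lits i).lang ↔ ∃ b, ∃ g ∈ (URE.concList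
      ((clausesUsing lits (.inl i) b).map (qd k n))).lang,
        u = (UWord.single (.inr (tfSym i b))).add g := by
  simp only [X9, URE.lang, Set.mem_union, URE.concList, List.foldr_cons, qt, qf,
    Set.mem_singleton_iff, exists_eq_left, Bool.exists_bool, tfSym, cond_true, cond_false]
  exact or_comm

lemma mem_lang_X9' {i : Fin n} {u : UWord (QSym k n)} :
    u ∈ (X9' lits i).lang ↔ ∃ b, ∃ g ∈ (URE.concList ((clausesUsing lits (.inl i) b).map
      fun c => URE.star (qd k n c))).lang, u = (UWord.single (.inr (tfSym i b))).add g := by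
  simp only [X9', URE.lang, Set.mem_union, URE.concList, List.foldr_cons, qt, qf,
    Set.mem_singleton_iff, exists_eq_left, Bool.exists_bool, tfSym, cond_true, cond_false]
  exact or_comm

lemma mem_lang_Y9 {j : Fin m} {v : UWord (QSym k n)} :
    v ∈ (Y9 lits j).lang ↔ ∃ b, v ∈ (URE.concList ((clausesUsing lits (.inr j) b).map
      fun c => URE.star (qd k n c))).lang := by
  simp only [Y9, URE.lang, Set.mem_union, Bool.exists_bool]
  exact or_comm

lemma apply_inr_eq_zero {P : Fin k → Prop} {g : UWord (QSym k n)}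
    (hg : ∀ a, g a ≠ 0 → ∃ c, P c ∧ a = .inl c) (x : Fin n ⊕ Fin n) :
    g (.inr x) = 0 := by
  by_contra h
  obtain ⟨c, -, hc⟩ := hg _ h
  cases hc

lemma sum_single_add_apply_inr (v : Fin n → Bool) {g : Fin n → UWord (QSym k n)}
    {y : Fin n ⊕ Fin n} (hg : ∀ i, g i (.inr y) = 0) :
    ∑ i, (UWord.single (.inr (tfSym i (v i)))).add (g i) (.inr y) = valWord v y := by
  refine Finset.sum_congr rfl fun i _ => ?_
  rw [UWord.add_apply, hg, add_zero, UWord.single_apply, UWord.single_apply]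
  simp

lemma exists_encodes_of_mem_lang_E9 {w : UWord (QSym k n)} (hw : w ∈ (E9 lits).lang) :
    ∃ vx, Encodes vx w := by
  obtain ⟨D, hD, W, hW, rfl⟩ := hw
  obtain ⟨u, hu, hW⟩ := (URE.mem_lang_concList_map_finRange _).1 hW
  choose b g hg hu using fun i => (mem_lang_X9 lits).1 (hu i)
  refine ⟨b, fun y => ?_⟩
  rw [UWord.add_apply, ((mem_lang_concList_map_qd _).1 hD).2, hW, zero_add,
    Finset.sum_congr rfl fun i _ => congrFun (hu i) _]
  exact sum_single_add_apply_inr b fun i => ((mem_lang_concList_map_qd _).1 (hg i)).2 y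

lemma exists_mem_lang_E9 (vx : Fin n → Bool) :
    ∃ w ∈ (E9 lits).lang, Encodes vx w ∧ ∀ c, w (.inl c) ≠ 0 := by
  let D : UWord (QSym k n) := Sum.elim (fun c => (List.finRange k).count c) 0
  let g (i : Fin n) : UWord (QSym k n) :=
    Sum.elim (fun c => (clausesUsing lits (.inl i) (vx i)).count c) 0
  have hD : D ∈ (URE.concList ((List.finRange k).map (qd k n))).lang :=
    (mem_lang_concList_map_qd _).2 ⟨fun _ => rfl, fun _ => rfl⟩
  have hg (i : Fin n) :
      g i ∈ (URE.concList ((clausesUsing lits (.inl i) (vx i)).map (qd k n))).lang :=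
    (mem_lang_concList_map_qd _).2 ⟨fun _ => rfl, fun _ => rfl⟩
  refine ⟨D.add fun a => ∑ i, (UWord.single (.inr (tfSym i (vx i)))).add (g i) a,
    ⟨D, hD, _, (URE.mem_lang_concList_map_finRange _).2
      ⟨_, fun i => (mem_lang_X9 lits).2 ⟨vx i, g i, hg i, rfl⟩, fun _ => rfl⟩, rfl⟩,
    fun y => (zero_add _).trans (sum_single_add_apply_inr vx fun _ => rfl), fun c => ?_⟩
  have : D (.inl c) = 1 :=
    List.count_eq_one_of_mem (List.nodup_finRange k) (List.mem_finRange c)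
  show D (.inl c) + _ ≠ 0
  omega

lemma sum_single_add_apply_inl (v : Fin n → Bool) (g : Fin n → UWord (QSym k n)) (c : Fin k) :
    ∑ i, (UWord.single (.inr (tfSym i (v i)))).add (g i) (.inl c) = ∑ i, g i (.inl c) :=
  Finset.sum_congr rfl fun _ _ => zero_add _

lemma mem_lang_E9'_iff {w : UWord (QSym k n)} :
    w ∈ (E9' lits).lang ↔ ∃ (vx : Fin n → Bool) (vy : Fin m → Bool)
      (p : Fin n ⊕ Fin m → UWord (QSym k n)),
      (∀ x a, p x a ≠ 0 → ∃ c, (x, Sum.elim vx vy x) ∈ lits c ∧ a = .inl c) ∧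
      Encodes vx w ∧ ∀ c, w (.inl c) = ∑ x, p x (.inl c) := by
  constructor
  · rintro ⟨W, hW, V, hV, rfl⟩
    obtain ⟨u, hu, hW⟩ := (URE.mem_lang_concList_map_finRange _).1 hW
    obtain ⟨v, hv, hV⟩ := (URE.mem_lang_concList_map_finRange _).1 hV
    choose vx g hg hu using fun i => (mem_lang_X9' lits).1 (hu i)
    choose vy hv using fun j => (mem_lang_Y9 lits).1 (hv j)
    simp only [mem_lang_concList_clausesUsing_star] at hg hv
    refine ⟨vx, vy, Sum.elim g v, fun x => ?_, fun y => ?_, fun c => ?_⟩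
    · rcases x with i | j
      exacts [hg i, hv j]
    · rw [UWord.add_apply, hW, hV, Finset.sum_congr rfl fun j _ => apply_inr_eq_zero (hv j) y,
        Finset.sum_const_zero, add_zero, Finset.sum_congr rfl fun i _ => congrFun (hu i) _]
      exact sum_single_add_apply_inr vx fun i => apply_inr_eq_zero (hg i) y
    · rw [UWord.add_apply, hW, hV, Finset.sum_congr rfl fun i _ => congrFun (hu i) _,
        sum_single_add_apply_inl, Fintype.sum_sum_type]
      rfl
  · rintro ⟨vx, vy, p, hp, hw, hd⟩
    refine ⟨fun a => ∑ i, (UWord.single (.inr (tfSym i (vx i)))).add (p (.inl i)) a,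
      (URE.mem_lang_concList_map_finRange _).2 ⟨_, fun i => (mem_lang_X9' lits).2
        ⟨vx i, p (.inl i), (mem_lang_concList_clausesUsing_star lits).2 (hp (.inl i)), rfl⟩,
        fun _ => rfl⟩,
      fun a => ∑ j, p (.inr j) a,
      (URE.mem_lang_concList_map_finRange _).2 ⟨_, fun j => (mem_lang_Y9 lits).2
        ⟨vy j, (mem_lang_concList_clausesUsing_star lits).2 (hp (.inr j))⟩, fun _ => rfl⟩,
      funext ?_⟩
    rintro (c | y) <;> show _ = _ + _ <;> beta_reduce
    · rw [hd, sum_single_add_apply_inl, Fintype.sum_sum_type]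
    · rw [hw, sum_single_add_apply_inr vx fun i => apply_inr_eq_zero (hp (.inl i)) y,
        Finset.sum_congr rfl fun j _ => apply_inr_eq_zero (hp (.inr j)) y, Finset.sum_const_zero,
        add_zero]

lemma mem_lang_E9'_of_satisfies {vx : Fin n → Bool} {vy : Fin m → Bool} {w : UWord (QSym k n)}
    (hsat : ∀ c, Satisfies (Sum.elim vx vy) (lits c)) (hw : Encodes vx w) :
    w ∈ (E9' lits).lang := by
  choose ℓ hℓ hval using hsat
  refine (mem_lang_E9'_iff lits).2 ⟨vx, vy,
    fun x => Sum.elim (fun c => if (ℓ c).1 = x then w (.inl c) else 0) 0, ?_, hw, fun c => ?_⟩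
  · rintro x (c | y) h
    · have hx : (ℓ c).1 = x := by
        by_contra hx
        simp [hx] at h
      refine ⟨c, ?_, rfl⟩
      rw [← hx, hval c]
      exact hℓ c
    · exact absurd rfl h
  · simp [Finset.sum_ite_eq]

lemma satisfies_of_mem_lang_E9' {w : UWord (QSym k n)} (hw : w ∈ (E9' lits).lang) :
    ∃ vx vy, Encodes vx w ∧
      ∀ c, w (.inl c) ≠ 0 → Satisfies (Sum.elim vx vy) (lits c) := by
  obtain ⟨vx, vy, p, hp, hvx, hd⟩ := (mem_lang_E9'_iff lits).1 hw
  refine ⟨vx, vy, hvx, fun c hc => ?_⟩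
  obtain ⟨x, -, hx⟩ := Finset.exists_ne_zero_of_sum_ne_zero (hd c ▸ hc)
  obtain ⟨c', hc', hcc'⟩ := hp x _ hx
  cases hcc'
  exact ⟨_, hc', rfl⟩

end QSym

/-- `ψ = ∀x₁,…,x_n ∃y₁,…,y_m. φ` is true if and only if
`L(E_ψ) ⊆ L(E'_ψ)`. -/
theorem statement9 (k n m : ℕ) (lits : Fin k → Finset ((Fin n ⊕ Fin m) × Bool)) :
    (∀ vx : Fin n → Bool, ∃ vy : Fin m → Bool, ∀ i : Fin k,
        ∃ ℓ ∈ lits i, Sum.elim vx vy ℓ.1 = ℓ.2) ↔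
      URE.lang (E9 lits) ⊆ URE.lang (E9' lits) := by
  constructor
  · intro hψ w hw
    obtain ⟨vx, hvx⟩ := QSym.exists_encodes_of_mem_lang_E9 lits hw
    obtain ⟨vy, hvy⟩ := hψ vx
    exact QSym.mem_lang_E9'_of_satisfies lits hvy hvx
  · intro hsub vx
    obtain ⟨w, hw, hvx, hd⟩ := QSym.exists_mem_lang_E9 lits vx
    obtain ⟨vx', vy, hvx', hsat⟩ := QSym.satisfies_of_mem_lang_E9' lits (hsub hw)
    obtain rfl := hvx'.unique hvx
    exact ⟨vy, fun c => hsat c (hd c)⟩
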